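/- Set n_k = ⌊exp(k exp(−(log k)^{1/6}))⌋. Then ( 1 − ( n_k log₂ n_k / (n_{k+1} log₂ n_{k+1}) )^{1/2} ) · (log₂ n_{k+1})^{2/3} → 0 as k → ∞. -/

import Mathlib

/-! Write `t = (log k)^{1/6}`, `ε_k = exp (-t)` and `a_k = k ε_k`, so that `n_k = ⌊exp a_k⌋`.
Since `t` grows more slowly than `log k`, `a_k` is nondecreasing with increments at most `ε_k`;
and taking the floor moves `log n_k` by at most `1 / n_k ≤ ε_k`. Hence
`log n_{k+1} - log n_k = O(ε_k)`, and the same holds for the logarithm of the ratio under the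
square root, so its square root is `1 + O(ε_k)`. As `llog n_{k+1} ≤ log k = t^6`, the whole
expression is `O(t^4 exp (-t))`, which tends to `0`. -/

open MeasureTheory ProbabilityTheory Filter

/-- `llog u = log (log (u ⊔ e))`. -/
noncomputable def llog (x : ℝ) : ℝ := Real.log (Real.log (max x (Real.exp 1)))

/-- Sup-norm over `[0,1]`. -/
noncomputable def supNorm (f : ℝ → ℝ) : ℝ := ⨆ t : Set.Icc (0:ℝ) 1, |f t|

/-- Membership in the Strassen set `S₁`. -/
def InStrassen1 (f : ℝ → ℝ) : Prop :=
  ∃ f' : ℝ → ℝ, Measurable f' ∧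
    (∀ x ∈ Set.Icc (0:ℝ) 1, f x = ∫ t in (0:ℝ)..x, f' t) ∧
    (∫ t in (0:ℝ)..1, (f' t) ^ 2) ≤ 1

/-- Membership in `S₂ = {f ∈ S₁ : f 1 = 0}`. -/
def InStrassen2 (f : ℝ → ℝ) : Prop := InStrassen1 f ∧ f 1 = 0

variable {Ω : Type*} [MeasurableSpace Ω]

/-- Empirical distribution function `F_n`. -/
noncomputable def empF (U : ℕ → Ω → ℝ) (n : ℕ) (t : ℝ) (ω : Ω) : ℝ :=
  (Set.ncard {i : ℕ | i < n ∧ U i ω ≤ t} : ℝ) / n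

/-- Uniform empirical process `α_n(t) = √n (F_n(t) - t)`. -/
noncomputable def empProc (U : ℕ → Ω → ℝ) (n : ℕ) (t : ℝ) (ω : Ω) : ℝ :=
  Real.sqrt n * (empF U n t ω - t)

/-- `H_n(t) = n (F_n(t) - t)`. -/
noncomputable def empH (U : ℕ → Ω → ℝ) (n : ℕ) (t : ℝ) (ω : Ω) : ℝ :=
  (n : ℝ) * (empF U n t ω - t)

/-- The generalized inverse `F_n⁻¹(t) = inf {u : F_n(u) ≥ t}`. -/
noncomputable def empQF (U : ℕ → Ω → ℝ) (n : ℕ) (t : ℝ) (ω : Ω) : ℝ :=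
  sInf {u : ℝ | t ≤ empF U n u ω}

/-- Uniform quantile process `β_n(t) = √n (F_n⁻¹(t) - t)`. -/
noncomputable def quantProc (U : ℕ → Ω → ℝ) (n : ℕ) (t : ℝ) (ω : Ω) : ℝ :=
  Real.sqrt n * (empQF U n t ω - t)

/-- `(U_i)` are i.i.d. uniform on `[0,1]`. -/
def IsUniformIID (μ : Measure Ω) (U : ℕ → Ω → ℝ) : Prop :=
  (∀ i, Measurable (U i)) ∧
  iIndepFun U μ ∧
  (∀ i, Measure.map (U i) μ = MeasureTheory.volume.restrict (Set.Icc (0:ℝ) 1))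

/-- The blocking sequence `n_k = ⌊exp (k exp (-(log k)^(1/6)))⌋`. -/
noncomputable def nseq (k : ℕ) : ℕ :=
  ⌊Real.exp (k * Real.exp (-(Real.log k) ^ ((1:ℝ)/6)))⌋₊

/-- `k(n)`: the index `k` with `n ∈ N_k = {n_k, …, n_{k+1} - 1}`. -/
noncomputable def kofn (n : ℕ) : ℕ := sSup {k : ℕ | nseq k ≤ n}

open Real Topology

theorem Real.rpow_sub_rpow_le_sub {p u v : ℝ} (hp₀ : 0 ≤ p) (hp₁ : p ≤ 1) (hu : 1 ≤ u)
    (huv : u ≤ v) : v ^ p - u ^ p ≤ v - u := by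
  have hu₀ : 0 < u := by linarith
  have hvu : 1 ≤ v / u := (one_le_div hu₀).2 huv
  have hup : u ^ p ≤ u := by simpa using rpow_le_rpow_of_exponent_le hu hp₁
  have hvup : (v / u) ^ p ≤ v / u := by simpa using rpow_le_rpow_of_exponent_le hvu hp₁
  calc v ^ p - u ^ p = u ^ p * ((v / u) ^ p - 1) := by
        rw [div_rpow (by linarith) hu₀.le]; field_simp
    _ ≤ u * (v / u - 1) := by
        gcongr
        exact sub_nonneg.2 (one_le_rpow hvu hp₀)
    _ = v - u := by field_simp

theorem Real.abs_log_sub_log_le {a b : ℝ} (ha : 1 ≤ a) (hb : 1 ≤ b) :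
    |log a - log b| ≤ |a - b| := by
  wlog hab : a ≤ b generalizing a b
  · rw [abs_sub_comm, abs_sub_comm a]; exact this hb ha (by linarith)
  have ha₀ : 0 < a := by linarith
  have h : log (b / a) ≤ b / a - 1 := log_le_sub_one_of_pos (by positivity)
  rw [log_div (by linarith) ha₀.ne'] at h
  rw [abs_sub_comm, abs_sub_comm a, abs_of_nonneg (log_le_log ha₀ hab |> sub_nonneg.2),
    abs_of_nonneg (sub_nonneg.2 hab)]
  calc log b - log a ≤ b / a - 1 := h
    _ = (b - a) / a := by field_simp
    _ ≤ b - a := div_le_self (by linarith) ha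

theorem Real.abs_one_sub_sqrt_le_abs_log {x : ℝ} (hx : 0 < x) (h : |log x| ≤ 2) :
    |1 - √x| ≤ |log x| := by
  have hsqrt : √x = exp (log x / 2) := by
    rw [sqrt_eq_rpow, rpow_def_of_pos hx]; ring_nf
  have hhalf : |log x / 2| ≤ 1 := by rw [abs_div, abs_two]; linarith
  calc |1 - √x| = |exp (log x / 2) - 1| := by rw [hsqrt, abs_sub_comm]
    _ ≤ 2 * |log x / 2| := abs_exp_sub_one_le hhalf
    _ = |log x| := by rw [abs_div, abs_two]; ring

theorem Real.abs_log_sub_log_natFloor_le {y : ℝ} (hy : 1 ≤ y) :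
    |log y - log ⌊y⌋₊| ≤ (⌊y⌋₊ : ℝ)⁻¹ := by
  have hfloor : (1 : ℝ) ≤ ⌊y⌋₊ := by exact_mod_cast Nat.one_le_floor_iff y |>.2 hy
  have hle : (⌊y⌋₊ : ℝ) ≤ y := Nat.floor_le (by linarith)
  have h := log_le_sub_one_of_pos (x := y / ⌊y⌋₊) (by positivity)
  rw [log_div (by linarith) (by linarith)] at h
  rw [abs_of_nonneg (sub_nonneg.2 (log_le_log (by linarith) hle))]
  calc log y - log ⌊y⌋₊ ≤ y / ⌊y⌋₊ - 1 := h
    _ = (y - ⌊y⌋₊) / ⌊y⌋₊ := by field_simp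
    _ ≤ 1 / ⌊y⌋₊ := by gcongr; linarith [Nat.lt_floor_add_one y]
    _ = (⌊y⌋₊ : ℝ)⁻¹ := one_div _

theorem llog_nonneg (x : ℝ) : 0 ≤ llog x := by
  have : exp 1 ≤ max x (exp 1) := le_max_right _ _
  exact log_nonneg ((le_log_iff_exp_le (by positivity)).2 this)

theorem llog_of_exp_one_le {x : ℝ} (hx : exp 1 ≤ x) : llog x = log (log x) := by
  rw [llog, max_eq_left hx]

theorem one_le_log_log_of_exp_exp_one_le {x : ℝ} (hx : exp (exp 1) ≤ x) :
    exp 1 ≤ x ∧ 1 ≤ log x ∧ 1 ≤ log (log x) := by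
  have h1 : (1 : ℝ) ≤ exp 1 := one_le_exp zero_le_one
  have hlog : exp 1 ≤ log x := by simpa using log_le_log (exp_pos _) hx
  exact ⟨(exp_le_exp.2 h1).trans hx, h1.trans hlog,
    (le_log_iff_exp_le (by linarith)).2 hlog⟩

theorem abs_one_sub_sqrt_llog_ratio_le {M N : ℝ} (hM : exp (exp 1) ≤ M) (hN : exp (exp 1) ≤ N)
    (h : |log N - log M| ≤ 1) :
    |1 - √(M * llog M / (N * llog N))| ≤ 2 * |log N - log M| := by
  obtain ⟨hM₁, hlogM, hllM⟩ := one_le_log_log_of_exp_exp_one_le hM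
  obtain ⟨hN₁, hlogN, hllN⟩ := one_le_log_log_of_exp_exp_one_le hN
  have hM₀ : 0 < M := (exp_pos 1).trans_le hM₁
  have hN₀ : 0 < N := (exp_pos 1).trans_le hN₁
  rw [llog_of_exp_one_le hM₁, llog_of_exp_one_le hN₁]
  have hlog : log (M * log (log M) / (N * log (log N)))
      = (log M - log N) + (log (log (log M)) - log (log (log N))) := by
    rw [log_div (by positivity) (by positivity), log_mul hM₀.ne' (by positivity),
      log_mul hN₀.ne' (by positivity)]
    ring
  have hbound : |log (M * log (log M) / (N * log (log N)))| ≤ 2 * |log N - log M| := by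
    rw [hlog, two_mul, abs_sub_comm (log N)]
    refine (abs_add_le _ _).trans (add_le_add le_rfl ?_)
    exact (abs_log_sub_log_le hllM hllN).trans (abs_log_sub_log_le hlogM hlogN)
  exact (abs_one_sub_sqrt_le_abs_log (by positivity) (by linarith)).trans hbound

theorem log_natCast_eq_rpow_pow (k : ℕ) : log k = ((log k) ^ ((1:ℝ)/6)) ^ 6 := by
  rw [one_div, ← Nat.cast_ofNat, rpow_inv_natCast_pow (log_natCast_nonneg k) (by norm_num)]

theorem one_le_log_of_three_le_rpow_log {k : ℕ} (hk : 3 ≤ (log k) ^ ((1:ℝ)/6)) :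
    1 ≤ log k := by
  rw [log_natCast_eq_rpow_pow]; nlinarith [pow_le_pow_left₀ (by norm_num) hk 6]

theorem natCast_pos_of_one_le_log {k : ℕ} (hk : 1 ≤ log k) : (0 : ℝ) < k := by
  rcases Nat.eq_zero_or_pos k with rfl | h
  · simp only [Nat.cast_zero, log_zero] at hk; linarith
  · exact_mod_cast h

theorem tendsto_rpow_log_natCast_atTop :
    Tendsto (fun k : ℕ ↦ (log k) ^ ((1:ℝ)/6)) atTop atTop :=
  (tendsto_rpow_atTop (by norm_num)).comp (tendsto_log_atTop.comp tendsto_natCast_atTop_atTop)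

namespace nseq

noncomputable def decay (k : ℕ) : ℝ := exp (-(log k) ^ ((1:ℝ)/6))

theorem eq_floor_exp (k : ℕ) : nseq k = ⌊exp (k * decay k)⌋₊ := rfl

theorem decay_pos (k : ℕ) : 0 < decay k := exp_pos _

theorem decay_antitone : Antitone decay := by
  intro j k hjk
  rcases Nat.eq_zero_or_pos j with rfl | hj
  · simp [decay, exp_le_one_iff, rpow_nonneg (log_natCast_nonneg k)]
  · unfold decay
    gcongr

theorem mul_decay_le_succ {k : ℕ} (hk : 1 ≤ log k) :
    k * decay k ≤ (k + 1 : ℕ) * decay (k + 1) := by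
  have hk₀ := natCast_pos_of_one_le_log hk
  push_cast
  have hlog : log k ≤ log (k + 1) := log_le_log hk₀ (by linarith)
  have hrpow := rpow_sub_rpow_le_sub (p := 1 / 6) (by norm_num) (by norm_num) hk hlog
  have hratio : decay k * (k / (k + 1)) ≤ decay (k + 1) := by
    rw [← exp_log (by positivity : (0 : ℝ) < k / (k + 1)), log_div hk₀.ne' (by positivity),
      decay, decay, ← exp_add]
    push_cast
    exact exp_le_exp.2 (by linarith)
  calc (k : ℝ) * decay k = (k + 1) * (decay k * (k / (k + 1))) := by field_simp
    _ ≤ (k + 1) * decay (k + 1) := by gcongr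

theorem succ_mul_decay_le (k : ℕ) :
    (k + 1 : ℕ) * decay (k + 1) ≤ k * decay k + decay k := by
  have h := decay_antitone k.le_succ
  push_cast
  nlinarith [decay_pos (k + 1)]

theorem decay_le_third {k : ℕ} (hk : 3 ≤ (log k) ^ ((1:ℝ)/6)) : decay k ≤ 1 / 3 := by
  have h3 : 3 < exp 3 := by linarith [add_one_lt_exp (x := 3) (by norm_num)]
  calc decay k ≤ exp (-3) := exp_le_exp.2 (by linarith)
    _ = (exp 3)⁻¹ := exp_neg 3
    _ ≤ 1 / 3 := by rw [one_div]; gcongr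

theorem exp_rpow_log_le {k : ℕ} (hk : 3 ≤ (log k) ^ ((1:ℝ)/6)) :
    exp ((log k) ^ ((1:ℝ)/6)) ≤ nseq k := by
  set t := (log k) ^ ((1:ℝ)/6)
  have hk₀ := natCast_pos_of_one_le_log (one_le_log_of_three_le_rpow_log hk)
  have ha : k * decay k = exp (log k - t) := by
    rw [exp_sub, exp_log hk₀, decay, exp_neg, ← div_eq_mul_inv]
  have ht : 2 * t ≤ log k := by
    rw [log_natCast_eq_rpow_pow]; nlinarith [pow_le_pow_left₀ (by norm_num) hk 5]
  have hat : t + 1 ≤ k * decay k := by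
    rw [ha]; linarith [add_one_le_exp (log k - t)]
  have he : 2 ≤ exp 1 := by linarith [add_one_le_exp 1]
  have hfloor := Nat.lt_floor_add_one (exp (k * decay k))
  rw [← eq_floor_exp] at hfloor
  calc exp t ≤ 2 * exp t - 1 := by linarith [one_le_exp (by linarith : 0 ≤ t)]
    _ ≤ exp 1 * exp t - 1 := by gcongr
    _ = exp (t + 1) - 1 := by rw [← exp_add, add_comm]
    _ ≤ exp (k * decay k) - 1 := by gcongr
    _ ≤ nseq k := by linarith

theorem exp_exp_one_le {k : ℕ} (hk : 3 ≤ (log k) ^ ((1:ℝ)/6)) : exp (exp 1) ≤ nseq k :=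
  (exp_le_exp.2 (by linarith [exp_one_lt_d9])).trans (exp_rpow_log_le hk)

theorem abs_log_sub_le {k : ℕ} (hk : 3 ≤ (log k) ^ ((1:ℝ)/6)) :
    |log (nseq k) - k * decay k| ≤ decay k := by
  have hy : 1 ≤ exp (k * decay k) := one_le_exp (mul_nonneg (Nat.cast_nonneg k) (decay_pos k).le)
  have h := abs_log_sub_log_natFloor_le hy
  rw [log_exp, ← eq_floor_exp, abs_sub_comm] at h
  refine h.trans ?_
  rw [decay, exp_neg]
  exact inv_anti₀ (exp_pos _) (exp_rpow_log_le hk)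

theorem abs_log_succ_sub_log_le {k : ℕ} (hk : 3 ≤ (log k) ^ ((1:ℝ)/6))
    (hk' : 3 ≤ (log (k + 1 : ℕ)) ^ ((1:ℝ)/6)) :
    |log (nseq (k + 1)) - log (nseq k)| ≤ 3 * decay k := by
  have h := abs_le.1 (abs_log_sub_le hk)
  have h' := abs_le.1 (abs_log_sub_le hk')
  have hmono := mul_decay_le_succ (one_le_log_of_three_le_rpow_log hk)
  have hsucc := succ_mul_decay_le k
  have hdecay := decay_antitone k.le_succ
  exact abs_le.2 ⟨by linarith, by linarith⟩

theorem llog_succ_le {k : ℕ} (hk : 3 ≤ (log k) ^ ((1:ℝ)/6))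
    (hk' : 3 ≤ (log (k + 1 : ℕ)) ^ ((1:ℝ)/6)) :
    llog (nseq (k + 1)) ≤ log k := by
  obtain ⟨hN, hlogN₁, -⟩ := one_le_log_log_of_exp_exp_one_le (exp_exp_one_le hk')
  have hk₀ := natCast_pos_of_one_le_log (one_le_log_of_three_le_rpow_log hk)
  have hk₁ : (1 : ℝ) ≤ k := Nat.one_le_cast.2 (Nat.cast_pos.1 hk₀)
  have hfloor : (nseq (k + 1) : ℝ) ≤ exp ((k + 1 : ℕ) * decay (k + 1)) :=
    Nat.floor_le (exp_pos _).le
  have hlogN : log (nseq (k + 1)) ≤ k := by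
    have := log_le_log ((exp_pos 1).trans_le hN) hfloor
    rw [log_exp] at this
    push_cast at this
    nlinarith [decay_le_third hk']
  rw [llog_of_exp_one_le hN]
  exact log_le_log (by linarith) hlogN

theorem tendsto_decay_mul_rpow_log :
    Tendsto (fun k : ℕ ↦ decay k * (log k) ^ ((2:ℝ)/3)) atTop (𝓝 0) := by
  have h : (fun k : ℕ ↦ decay k * (log k) ^ ((2:ℝ)/3)) =
      (fun t ↦ t ^ 4 * exp (-t)) ∘ (fun k : ℕ ↦ (log k) ^ ((1:ℝ)/6)) := by
    funext k
    rw [Function.comp_apply, decay, mul_comm, ← rpow_natCast, ← rpow_mul (log_natCast_nonneg k)]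
    norm_num
  rw [h]
  exact (tendsto_pow_mul_exp_neg_atTop_nhds_zero 4).comp tendsto_rpow_log_natCast_atTop

end nseq

theorem statement :
    Tendsto (fun k : ℕ =>
      (1 - Real.sqrt (((nseq k : ℝ) * llog (nseq k)) /
          ((nseq (k + 1) : ℝ) * llog (nseq (k + 1))))) *
        llog (nseq (k + 1)) ^ ((2:ℝ)/3)) atTop (nhds 0) := by
  have hlarge : ∀ᶠ k : ℕ in atTop, 3 ≤ (log k) ^ ((1:ℝ)/6) :=
    tendsto_rpow_log_natCast_atTop.eventually_ge_atTop 3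
  have hbound :
      Tendsto (fun k : ℕ ↦ 6 * (nseq.decay k * (log k) ^ ((2:ℝ)/3))) atTop (𝓝 0) := by
    simpa using nseq.tendsto_decay_mul_rpow_log.const_mul 6
  refine squeeze_zero_norm' ?_ hbound
  filter_upwards [hlarge, (tendsto_add_atTop_nat 1).eventually hlarge] with k hk hk'
  have hdiff := nseq.abs_log_succ_sub_log_le hk hk'
  have hdiff₁ : |log (nseq (k + 1)) - log (nseq k)| ≤ 1 := by
    linarith [nseq.decay_le_third hk]
  have hratio := abs_one_sub_sqrt_llog_ratio_le (nseq.exp_exp_one_le hk)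
    (nseq.exp_exp_one_le hk') hdiff₁
  have hllog := nseq.llog_succ_le hk hk'
  have hllog₀ := llog_nonneg (nseq (k + 1))
  have hdecay := nseq.decay_pos k
  rw [Real.norm_eq_abs, abs_mul, abs_of_nonneg (rpow_nonneg hllog₀ _)]
  calc _ ≤ 2 * |log (nseq (k + 1)) - log (nseq k)| * llog (nseq (k + 1)) ^ ((2:ℝ)/3) := by
        gcongr
    _ ≤ 2 * (3 * nseq.decay k) * (log k) ^ ((2:ℝ)/3) := by
        gcongr
    _ = 6 * (nseq.decay k * (log k) ^ ((2:ℝ)/3)) := by ring
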